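/- arXiv:2509.22145 — 6 statements merged into one kernel-verified Lean document; each statement's English description precedes it below -/
import Mathlib

section
/- Let A be a finite nonempty set and let C be a collection of equivalence relations on A containing the equality relation 0 and the all relation 1, closed under intersection, and such that for all α, β ∈ C the relational composition α∘β lies in C and equals β∘α (so C is a bounded lattice of equivalence relations in which join is composition). Assume A is directly indecomposable with respect to C, i.e. there are no α, β ∈ C \ {0} with α ∩ β = 0 and α∘β = 1. Then: (i) every minimal element of C \ {0,1} is contained in every maximal element of C \ {0,1}; (ii) some element of C \ {0,1} is simultaneously maximal and minimal if and only if C is a three-element chain {0, α, 1}. -/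
/-- `α` is a minimal element of `C \ {⊥, ⊤}`: the only element of `C` strictly below it
is the equality relation `⊥`. -/
def IsMinIn {A : Type*} (C : Set (Setoid A)) (α : Setoid A) : Prop :=
  α ∈ C ∧ α ≠ ⊥ ∧ α ≠ ⊤ ∧ ∀ β ∈ C, β < α → β = ⊥

/-- `α` is a maximal element of `C \ {⊥, ⊤}`: the only element of `C` strictly above it
is the all relation `⊤`. -/
def IsMaxIn {A : Type*} (C : Set (Setoid A)) (α : Setoid A) : Prop :=
  α ∈ C ∧ α ≠ ⊥ ∧ α ≠ ⊤ ∧ ∀ β ∈ C, α < β → β = ⊤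

/-!
If `α` is minimal and `α ≰ β`, then `α ⊓ β = ⊥`. If moreover `β` is maximal, the join
`α ∘ β` lies strictly above `β`, so it is `⊤`, and `α, β` would decompose `A`. Hence every
minimal element lies below every maximal one. An element `α` that is both minimal and maximal
is comparable with every `β ∈ C` by the same argument (with the roles of `α` and `β`
swapped), which forces `β ∈ {⊥, α, ⊤}`.
-/

section

variable {A : Type*}

theorem Setoid.left_le_of_r_eq_comp {α β γ : Setoid A} (h : γ.r = Relation.Comp α.r β.r) :
    α ≤ γ :=
  fun _ y hxy => h ▸ ⟨y, hxy, β.refl y⟩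

theorem Setoid.right_le_of_r_eq_comp {α β γ : Setoid A} (h : γ.r = Relation.Comp α.r β.r) :
    β ≤ γ :=
  fun x _ hxy => h ▸ ⟨x, α.refl x, hxy⟩

theorem IsMinIn.inf_eq_bot {C : Set (Setoid A)}
    (hinf : ∀ α ∈ C, ∀ β ∈ C, α ⊓ β ∈ C) {α β : Setoid A} (hα : IsMinIn C α) (hβ : β ∈ C)
    (hαβ : ¬ α ≤ β) : α ⊓ β = ⊥ :=
  hα.2.2.2 _ (hinf α hα.1 β hβ) (inf_lt_left.mpr hαβ)

theorem IsMaxIn.le_of_inf_eq_bot {C : Set (Setoid A)}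
    (hcompMem : ∀ α ∈ C, ∀ β ∈ C, ∃ γ ∈ C, γ.r = Relation.Comp α.r β.r)
    (hind : ¬ ∃ α ∈ C, ∃ β ∈ C, α ≠ ⊥ ∧ β ≠ ⊥ ∧ α ⊓ β = ⊥ ∧
      Relation.Comp α.r β.r = fun _ _ => True)
    {α β : Setoid A} (hβ : IsMaxIn C β) (hα : α ∈ C) (hα0 : α ≠ ⊥) (hαβ : α ⊓ β = ⊥) :
    α ≤ β := by
  obtain ⟨γ, hγC, hγ⟩ := hcompMem α hα β hβ.1
  rcases (Setoid.right_le_of_r_eq_comp hγ).lt_or_eq with hβγ | rfl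
  · have hγtop : γ = ⊤ := hβ.2.2.2 γ hγC hβγ
    refine absurd ⟨α, hα, β, hβ.1, hα0, hβ.2.1, hαβ, ?_⟩ hind
    rw [← hγ, hγtop, Setoid.top_def]
    rfl
  · exact Setoid.left_le_of_r_eq_comp hγ

theorem IsMinIn.le_of_isMaxIn {C : Set (Setoid A)}
    (hinf : ∀ α ∈ C, ∀ β ∈ C, α ⊓ β ∈ C)
    (hcompMem : ∀ α ∈ C, ∀ β ∈ C, ∃ γ ∈ C, γ.r = Relation.Comp α.r β.r)
    (hind : ¬ ∃ α ∈ C, ∃ β ∈ C, α ≠ ⊥ ∧ β ≠ ⊥ ∧ α ⊓ β = ⊥ ∧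
      Relation.Comp α.r β.r = fun _ _ => True)
    {α β : Setoid A} (hα : IsMinIn C α) (hβ : IsMaxIn C β) : α ≤ β := by
  by_contra hαβ
  exact hαβ (hβ.le_of_inf_eq_bot hcompMem hind hα.1 hα.2.1 (hα.inf_eq_bot hinf hβ.1 hαβ))

theorem eq_bot_or_eq_or_eq_top_of_isMinIn_of_isMaxIn {C : Set (Setoid A)}
    (hinf : ∀ α ∈ C, ∀ β ∈ C, α ⊓ β ∈ C)
    (hcompMem : ∀ α ∈ C, ∀ β ∈ C, ∃ γ ∈ C, γ.r = Relation.Comp α.r β.r)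
    (hind : ¬ ∃ α ∈ C, ∃ β ∈ C, α ≠ ⊥ ∧ β ≠ ⊥ ∧ α ⊓ β = ⊥ ∧
      Relation.Comp α.r β.r = fun _ _ => True)
    {α β : Setoid A} (hmin : IsMinIn C α) (hmax : IsMaxIn C α) (hβ : β ∈ C) :
    β = ⊥ ∨ β = α ∨ β = ⊤ := by
  by_cases hβ0 : β = ⊥
  · exact Or.inl hβ0
  by_cases hαβ : α ≤ β
  · rcases hαβ.lt_or_eq with hlt | rfl
    · exact Or.inr (Or.inr (hmax.2.2.2 β hβ hlt))
    · exact Or.inr (Or.inl rfl)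
  have hβα : β ≤ α :=
    hmax.le_of_inf_eq_bot hcompMem hind hβ hβ0 (inf_comm α β ▸ hmin.inf_eq_bot hinf hβ hαβ)
  rcases hβα.lt_or_eq with hlt | rfl
  · exact Or.inl (hmin.2.2.2 β hβ hlt)
  · exact Or.inr (Or.inl rfl)

theorem isMinIn_and_isMaxIn_of_eq_triple {α : Setoid A} (hα0 : α ≠ ⊥) (hα1 : α ≠ ⊤) :
    IsMinIn {⊥, α, ⊤} α ∧ IsMaxIn {⊥, α, ⊤} α := by
  have hmem : α ∈ ({⊥, α, ⊤} : Set (Setoid A)) := Or.inr (Or.inl rfl)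
  refine ⟨⟨hmem, hα0, hα1, ?_⟩, hmem, hα0, hα1, ?_⟩
  · rintro β (rfl | rfl | rfl) h
    · rfl
    · exact absurd h (lt_irrefl _)
    · exact absurd (h.trans_le le_top) (lt_irrefl _)
  · rintro β (rfl | rfl | rfl) h
    · exact absurd (bot_le.trans_lt h) (lt_irrefl _)
    · exact absurd h (lt_irrefl _)
    · rfl

end

theorem stmt0_general {A : Type*} (C : Set (Setoid A))
    (hbot : ⊥ ∈ C) (htop : ⊤ ∈ C)
    (hinf : ∀ α ∈ C, ∀ β ∈ C, α ⊓ β ∈ C)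
    (hcompMem : ∀ α ∈ C, ∀ β ∈ C, ∃ γ ∈ C, γ.r = Relation.Comp α.r β.r)
    (hind : ¬ ∃ α ∈ C, ∃ β ∈ C, α ≠ ⊥ ∧ β ≠ ⊥ ∧ α ⊓ β = ⊥ ∧
      Relation.Comp α.r β.r = fun _ _ => True) :
    (∀ α, IsMinIn C α → ∀ β, IsMaxIn C β → α ≤ β) ∧
    ((∃ α, IsMinIn C α ∧ IsMaxIn C α) ↔
      ∃ α : Setoid A, α ≠ ⊥ ∧ α ≠ ⊤ ∧ C = {⊥, α, ⊤}) := by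
  refine ⟨fun α hα β hβ => hα.le_of_isMaxIn hinf hcompMem hind hβ, ⟨?_, ?_⟩⟩
  · rintro ⟨α, hmin, hmax⟩
    refine ⟨α, hmin.2.1, hmin.2.2.1, Set.Subset.antisymm ?_ ?_⟩
    · exact fun β hβ =>
        eq_bot_or_eq_or_eq_top_of_isMinIn_of_isMaxIn hinf hcompMem hind hmin hmax hβ
    · rintro β (rfl | rfl | rfl)
      exacts [hbot, hmin.1, htop]
  · rintro ⟨α, hα0, hα1, rfl⟩
    exact ⟨α, isMinIn_and_isMaxIn_of_eq_triple hα0 hα1⟩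

theorem stmt0 {A : Type*} [Finite A] [Nonempty A] (C : Set (Setoid A))
    (hbot : ⊥ ∈ C) (htop : ⊤ ∈ C)
    (hinf : ∀ α ∈ C, ∀ β ∈ C, α ⊓ β ∈ C)
    (hcompMem : ∀ α ∈ C, ∀ β ∈ C, ∃ γ ∈ C, γ.r = Relation.Comp α.r β.r)
    (hcompComm : ∀ α ∈ C, ∀ β ∈ C, Relation.Comp α.r β.r = Relation.Comp β.r α.r)
    (hind : ¬ ∃ α ∈ C, ∃ β ∈ C, α ≠ ⊥ ∧ β ≠ ⊥ ∧ α ⊓ β = ⊥ ∧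
      Relation.Comp α.r β.r = fun _ _ => True) :
    (∀ α, IsMinIn C α → ∀ β, IsMaxIn C β → α ≤ β) ∧
    ((∃ α, IsMinIn C α ∧ IsMaxIn C α) ↔
      ∃ α : Setoid A, α ≠ ⊥ ∧ α ≠ ⊤ ∧ C = {⊥, α, ⊤}) :=
  stmt0_general C hbot htop hinf hcompMem hind
end

section
/- Let Q be a finite connected faithful quandle and let N be a nilpotent normal subgroup of LMlt(Q). For a prime p let P be the (unique) Sylow p-subgroup of N. Then the orbit relation O_P is a congruence of Q, and for distinct primes p ≠ q with P, R the Sylow p- and q-subgroups of N, the intersection O_P ∩ O_R is the equality relation on Q (i.e., if g(x) = y for some g ∈ P and h(x) = y for some h ∈ R, then x = y). -/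
/-- A quandle structure on `Q`, given by its left translations: each `L x` is a
permutation of `Q`, `x * x = x`, and `x * (y * z) = (x * y) * (x * z)`
(writing `x * y` for `L x y`). -/
structure QuandleStr (Q : Type*) where
  L : Q → Equiv.Perm Q
  idem : ∀ x : Q, L x x = x
  selfDistrib : ∀ x y z : Q, L x (L y z) = L (L x y) (L x z)

namespace QuandleStr

variable {Q : Type*} (S : QuandleStr Q)

/-- The left multiplication group `LMlt(Q)`, generated by all left translations. -/
def Lmlt : Subgroup (Equiv.Perm Q) :=
  Subgroup.closure (Set.range S.L)

/-- The displacement group `Dis(Q)`, generated by all `L x * (L y)⁻¹`. -/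
def Dis : Subgroup (Equiv.Perm Q) :=
  Subgroup.closure {g : Equiv.Perm Q | ∃ x y : Q, g = S.L x * (S.L y)⁻¹}

/-- A congruence of the quandle: an equivalence relation compatible with `*` and `\`. -/
def IsCong (θ : Setoid Q) : Prop :=
  ∀ x y u v : Q, θ.r x y → θ.r u v →
    θ.r (S.L x u) (S.L y v) ∧ θ.r ((S.L x)⁻¹ u) ((S.L y)⁻¹ v)

/-- A quandle is faithful if `x ↦ L x` is injective. -/
def Faithful : Prop := Function.Injective S.L

/-- A quandle is connected if `LMlt(Q)` acts transitively. -/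
def Connected : Prop := ∀ x y : Q, ∃ g ∈ S.Lmlt, g x = y

/-- A quandle is latin if all right translations are bijective. -/
def Latin : Prop := ∀ y : Q, Function.Bijective fun x : Q => S.L x y

/-- `θ` is a minimal congruence: not equality, and the only congruence strictly
contained in it is equality. -/
def IsMinCong (θ : Setoid Q) : Prop :=
  S.IsCong θ ∧ θ ≠ ⊥ ∧ ∀ β : Setoid Q, S.IsCong β → β < θ → β = ⊥

/-- `θ` is a maximal congruence: not the all relation, and the only congruence strictly
containing it is the all relation. -/
def IsMaxCong (θ : Setoid Q) : Prop :=
  S.IsCong θ ∧ θ ≠ ⊤ ∧ ∀ β : Setoid Q, S.IsCong β → θ < β → β = ⊤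

/-- `Dis_α`: the subgroup generated by the `L x * (L y)⁻¹` with `x α y`. -/
def DisC (r : Q → Q → Prop) : Subgroup (Equiv.Perm Q) :=
  Subgroup.closure {g : Equiv.Perm Q | ∃ x y : Q, r x y ∧ g = S.L x * (S.L y)⁻¹}

/-- `Dis^α`: the elements of `Dis(Q)` displacing every point inside its `α`-class. -/
def DisUp (θ : Setoid Q) : Subgroup (Equiv.Perm Q) where
  carrier := {g : Equiv.Perm Q | g ∈ S.Dis ∧ ∀ x : Q, θ.r (g x) x}
  one_mem' := ⟨S.Dis.one_mem, fun x => θ.iseqv.refl x⟩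
  mul_mem' := by
    rintro a b ⟨ha, ha2⟩ ⟨hb, hb2⟩
    refine ⟨S.Dis.mul_mem ha hb, fun x => ?_⟩
    rw [Equiv.Perm.mul_apply]
    exact θ.iseqv.trans (ha2 (b x)) (hb2 x)
  inv_mem' := by
    rintro a ⟨ha, ha2⟩
    refine ⟨S.Dis.inv_mem ha, fun x => ?_⟩
    have h := ha2 (a⁻¹ x)
    rw [show a (a⁻¹ x) = x by simp] at h
    exact θ.iseqv.symm h

end QuandleStr

/-- The orbit equivalence relation of a subgroup of permutations. -/
def orbSetoid {Q : Type*} (N : Subgroup (Equiv.Perm Q)) : Setoid Q where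
  r x y := ∃ n ∈ N, n x = y
  iseqv := by
    refine ⟨fun x => ⟨1, N.one_mem, rfl⟩, ?_, ?_⟩
    · rintro x y ⟨n, hn, rfl⟩
      exact ⟨n⁻¹, N.inv_mem hn, by simp⟩
    · rintro x y z ⟨n, hn, rfl⟩ ⟨m, hm, rfl⟩
      exact ⟨m * n, N.mul_mem hm hn, Equiv.Perm.mul_apply m n x⟩


/-!
Every `g ∈ LMlt(Q)` satisfies `L (g x) = g * L x * g⁻¹`. The subgroup `P` contains every
`p`-subgroup of `N`, in particular its own conjugates by `LMlt(Q)`, so it is normal in `LMlt(Q)`;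
together with the conjugation formula this makes the `P`-orbits compatible with left
translations. If moreover `y = g x` with `g ∈ P`, then `L x * (L y)⁻¹ = (L x * g * (L x)⁻¹) * g⁻¹`
lies in `P`; if also `y = h x` with `h ∈ R`, the same element lies in `R`, so it is trivial
because `P ∩ R = 1`, and faithfulness gives `x = y`.
-/

theorem conj_mem_of_forall_isPGroup_le {G : Type*} [Group G] {N T : Subgroup G} {p : ℕ}
    {k : G} (hk : ∀ n ∈ N, k * n * k⁻¹ ∈ N) (hTle : T ≤ N) (hT : IsPGroup p T)
    (hTmax : ∀ T' : Subgroup G, T' ≤ N → IsPGroup p T' → T' ≤ T) :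
    ∀ n ∈ T, k * n * k⁻¹ ∈ T := by
  intro n hn
  have hmap : T.map (MulAut.conj k).toMonoidHom ≤ T := by
    refine hTmax _ ?_ (hT.map _)
    rintro _ ⟨m, hm, rfl⟩
    simpa using hk m (hTle hm)
  exact hmap ⟨n, hn, by simp⟩

section orbSetoid

variable {Q : Type*} {P : Subgroup (Equiv.Perm Q)}

theorem orbSetoid_apply_apply {k : Equiv.Perm Q} (hk : ∀ n ∈ P, k * n * k⁻¹ ∈ P) {x y : Q}
    (hxy : orbSetoid P x y) : orbSetoid P (k x) (k y) := by
  obtain ⟨n, hn, rfl⟩ := hxy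
  exact ⟨k * n * k⁻¹, hk n hn, by simp [Equiv.Perm.mul_apply]⟩

theorem orbSetoid_apply_conj_apply {k g : Equiv.Perm Q} (hk : ∀ n ∈ P, k * n * k⁻¹ ∈ P)
    (hg : g ∈ P) {u v : Q} (huv : orbSetoid P u v) : orbSetoid P (k u) ((g * k * g⁻¹) v) := by
  have hu : orbSetoid P u (g⁻¹ v) :=
    (orbSetoid P).trans huv ⟨g⁻¹, P.inv_mem hg, rfl⟩
  refine (orbSetoid P).trans (orbSetoid_apply_apply hk hu) ⟨g, hg, ?_⟩
  simp [Equiv.Perm.mul_apply]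

end orbSetoid

namespace QuandleStr

variable {Q : Type*} (S : QuandleStr Q)

theorem L_mem_Lmlt (x : Q) : S.L x ∈ S.Lmlt :=
  Subgroup.subset_closure ⟨x, rfl⟩

theorem mul_L_mul_inv {g : Equiv.Perm Q} (hg : g ∈ S.Lmlt) (x : Q) :
    g * S.L x * g⁻¹ = S.L (g x) := by
  induction hg using Subgroup.closure_induction generalizing x with
  | mem _ hz =>
    obtain ⟨z, rfl⟩ := hz
    ext w
    simpa using S.selfDistrib z x ((S.L z)⁻¹ w)
  | one => simp
  | mul a b _ _ ha hb =>
    rw [show a * b * S.L x * (a * b)⁻¹ = a * (b * S.L x * b⁻¹) * a⁻¹ by group, hb, ha,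
      Equiv.Perm.mul_apply]
  | inv a _ ha =>
    have h := ha (a⁻¹ x)
    rw [show a (a⁻¹ x) = x by simp] at h
    rw [← h]
    group

variable {P : Subgroup (Equiv.Perm Q)}

theorem isCong_orbSetoid (hPle : P ≤ S.Lmlt)
    (hPnorm : ∀ k ∈ S.Lmlt, ∀ n ∈ P, k * n * k⁻¹ ∈ P) : S.IsCong (orbSetoid P) := by
  rintro x _ u v ⟨g, hg, rfl⟩ huv
  have hLx := S.L_mem_Lmlt x
  have hL : S.L (g x) = g * S.L x * g⁻¹ := (S.mul_L_mul_inv (hPle hg) x).symm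
  refine ⟨?_, ?_⟩
  · rw [hL]
    exact orbSetoid_apply_conj_apply (hPnorm _ hLx) hg huv
  · rw [hL, show (g * S.L x * g⁻¹)⁻¹ = g * (S.L x)⁻¹ * g⁻¹ by group]
    exact orbSetoid_apply_conj_apply (hPnorm _ (S.Lmlt.inv_mem hLx)) hg huv

theorem L_mul_inv_L_apply_mem (hPle : P ≤ S.Lmlt) {x : Q}
    (hPnorm : ∀ n ∈ P, S.L x * n * (S.L x)⁻¹ ∈ P) {g : Equiv.Perm Q} (hg : g ∈ P) :
    S.L x * (S.L (g x))⁻¹ ∈ P := by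
  rw [← S.mul_L_mul_inv (hPle hg), show S.L x * (g * S.L x * g⁻¹)⁻¹ =
    (S.L x * g * (S.L x)⁻¹) * g⁻¹ by group]
  exact P.mul_mem (hPnorm g hg) (P.inv_mem hg)

end QuandleStr

theorem stmt2_general {Q : Type*} (S : QuandleStr Q)
    (hfaith : S.Faithful)
    (N : Subgroup (Equiv.Perm Q)) (hNle : N ≤ S.Lmlt)
    (hNnorm : ∀ g ∈ S.Lmlt, ∀ n ∈ N, g * n * g⁻¹ ∈ N)
    (p q : ℕ) (hp : p.Prime) (hq : q.Prime)
    (P R : Subgroup (Equiv.Perm Q))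
    -- `P` is the unique Sylow `p`-subgroup of `N`:
    (hPle : P ≤ N) (hPp : IsPGroup p P)
    (hPmax : ∀ T : Subgroup (Equiv.Perm Q), T ≤ N → IsPGroup p T → T ≤ P)
    -- `R` is the unique Sylow `q`-subgroup of `N`:
    (hRle : R ≤ N) (hRq : IsPGroup q R)
    (hRmax : ∀ T : Subgroup (Equiv.Perm Q), T ≤ N → IsPGroup q T → T ≤ R) :
    S.IsCong (orbSetoid P) ∧
    (p ≠ q → ∀ x y : Q, (∃ g ∈ P, g x = y) → (∃ h ∈ R, h x = y) → x = y) := by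
  have hPnorm : ∀ k ∈ S.Lmlt, ∀ n ∈ P, k * n * k⁻¹ ∈ P := fun k hk =>
    conj_mem_of_forall_isPGroup_le (hNnorm k hk) hPle hPp hPmax
  have hRnorm : ∀ k ∈ S.Lmlt, ∀ n ∈ R, k * n * k⁻¹ ∈ R := fun k hk =>
    conj_mem_of_forall_isPGroup_le (hNnorm k hk) hRle hRq hRmax
  refine ⟨S.isCong_orbSetoid (hPle.trans hNle) hPnorm, ?_⟩
  rintro hpq x _ ⟨g, hg, rfl⟩ ⟨h, hh, hhg⟩
  have : Fact p.Prime := ⟨hp⟩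
  have : Fact q.Prime := ⟨hq⟩
  have hmemP := S.L_mul_inv_L_apply_mem (hPle.trans hNle) (hPnorm _ (S.L_mem_Lmlt x)) hg
  have hmemR := S.L_mul_inv_L_apply_mem (hRle.trans hNle) (hRnorm _ (S.L_mem_Lmlt x)) hh
  rw [hhg] at hmemR
  apply hfaith
  rw [← mul_inv_eq_one]
  exact Subgroup.disjoint_def.mp (IsPGroup.disjoint_of_ne p q hpq P R hPp hRq) hmemP hmemR

theorem stmt2 {Q : Type*} [Finite Q] (S : QuandleStr Q)
    (hconn : S.Connected) (hfaith : S.Faithful)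
    (N : Subgroup (Equiv.Perm Q)) (hNle : N ≤ S.Lmlt)
    (hNnorm : ∀ g ∈ S.Lmlt, ∀ n ∈ N, g * n * g⁻¹ ∈ N)
    (hNnilp : Group.IsNilpotent N)
    (p q : ℕ) (hp : p.Prime) (hq : q.Prime)
    (P R : Subgroup (Equiv.Perm Q))
    -- `P` is the unique Sylow `p`-subgroup of `N`:
    (hPle : P ≤ N) (hPp : IsPGroup p P)
    (hPmax : ∀ T : Subgroup (Equiv.Perm Q), T ≤ N → IsPGroup p T → T ≤ P)
    -- `R` is the unique Sylow `q`-subgroup of `N`: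
    (hRle : R ≤ N) (hRq : IsPGroup q R)
    (hRmax : ∀ T : Subgroup (Equiv.Perm Q), T ≤ N → IsPGroup q T → T ≤ R) :
    S.IsCong (orbSetoid P) ∧
    (p ≠ q → ∀ x y : Q, (∃ g ∈ P, g x = y) → (∃ h ∈ R, h x = y) → x = y) :=
  stmt2_general S hfaith N hNle hNnorm p q hp hq P R hPle hPp hPmax hRle hRq hRmax
end

section
/- Let Q be a faithful left quasigroup. If Q is subdirectly reducible, i.e. there exists a family (α_i)_{i∈I} of congruences of Q, each different from the equality relation, whose intersection is the equality relation, then LMlt(Q) is subdirectly reducible as a group: there exists a family of nontrivial normal subgroups of LMlt(Q) whose intersection is trivial. -/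
/-! Every congruence `α` of `Q` is preserved by `LMlt(Q)`, so it yields a normal subgroup of
`LMlt(Q)`: the kernel of the action on the blocks `Q/α`. If `a ≠ b` are `α`-related, then
`L a (L b)⁻¹` lies in this kernel and, by faithfulness, is not the identity. An element lying in
every kernel fixes each `x` modulo every `α i`, hence modulo their meet, which is equality. -/

/-- A left quasigroup structure on `Q`, given by its left translations:
each `L x` is a permutation of `Q` (so `x * y = L x y` and `x \ y = (L x)⁻¹ y`). -/
structure LQStr (Q : Type*) where
  L : Q → Equiv.Perm Q

namespace LQStr

variable {Q : Type*} (S : LQStr Q)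

/-- The left multiplication group `LMlt(Q)`, generated by all left translations. -/
def Lmlt : Subgroup (Equiv.Perm Q) :=
  Subgroup.closure (Set.range S.L)

/-- A congruence: an equivalence relation compatible with `*` and `\`. -/
def IsCong (θ : Setoid Q) : Prop :=
  ∀ x y u v : Q, θ.r x y → θ.r u v →
    θ.r (S.L x u) (S.L y v) ∧ θ.r ((S.L x)⁻¹ u) ((S.L y)⁻¹ v)

/-- A left quasigroup is faithful if `x ↦ L x` is injective. -/
def Faithful : Prop := Function.Injective S.L

end LQStr

namespace Setoid

variable {Q : Type*} (θ : Setoid Q)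

def compatiblePerm : Subgroup (Equiv.Perm Q) where
  carrier := {g | ∀ x y, θ x y ↔ θ (g x) (g y)}
  one_mem' _ _ := Iff.rfl
  mul_mem' hg hh x y := (hh x y).trans (hg _ _)
  inv_mem' {g} hg x y := by
    simpa only [Equiv.Perm.coe_inv, Equiv.apply_symm_apply] using (hg (g⁻¹ x) (g⁻¹ y)).symm

def quotientPermHom : θ.compatiblePerm →* Equiv.Perm (Quotient θ) where
  toFun g := Quotient.congr g.1 g.2
  map_one' := by ext ⟨x⟩; rfl
  map_mul' _ _ := by ext ⟨x⟩; rfl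

theorem mem_ker_quotientPermHom {g : θ.compatiblePerm} :
    g ∈ θ.quotientPermHom.ker ↔ ∀ x, θ (g.1 x) x := by
  simp only [MonoidHom.mem_ker, Equiv.ext_iff, Quotient.forall]
  exact forall_congr' fun x => Quotient.eq

end Setoid

namespace LQStr

variable {Q : Type*} {S : LQStr Q} {θ : Setoid Q}

theorem IsCong.lmlt_le_compatiblePerm (hθ : S.IsCong θ) : S.Lmlt ≤ θ.compatiblePerm := by
  refine (Subgroup.closure_le _).2 ?_
  rintro _ ⟨a, rfl⟩ x y
  refine ⟨fun h => (hθ a a x y (θ.refl a) h).1, fun h => ?_⟩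
  simpa only [Equiv.Perm.coe_inv, Equiv.symm_apply_apply] using (hθ a a _ _ (θ.refl a) h).2

variable (S) in
def blockKernel (hθ : S.IsCong θ) : Subgroup S.Lmlt :=
  θ.quotientPermHom.ker.comap (Subgroup.inclusion hθ.lmlt_le_compatiblePerm)

theorem mem_blockKernel (hθ : S.IsCong θ) {g : S.Lmlt} :
    g ∈ S.blockKernel hθ ↔ ∀ x, θ (g.1 x) x :=
  θ.mem_ker_quotientPermHom

instance blockKernel_normal (hθ : S.IsCong θ) : (S.blockKernel hθ).Normal :=
  Subgroup.Normal.comap inferInstance _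

variable (S) in
theorem L_mul_inv_L_mem_Lmlt (a b : Q) : S.L a * (S.L b)⁻¹ ∈ S.Lmlt :=
  mul_mem (Subgroup.subset_closure ⟨a, rfl⟩) (inv_mem (Subgroup.subset_closure ⟨b, rfl⟩))

theorem L_mul_inv_L_mem_blockKernel (hθ : S.IsCong θ) {a b : Q} (hab : θ a b) :
    ⟨_, S.L_mul_inv_L_mem_Lmlt a b⟩ ∈ S.blockKernel hθ := by
  refine (mem_blockKernel hθ).2 fun x => θ.symm' ?_
  have hinv : θ ((S.L a)⁻¹ x) ((S.L b)⁻¹ x) := (hθ a b x x hab (θ.refl x)).2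
  simpa only [Equiv.Perm.coe_inv, Equiv.apply_symm_apply, Equiv.Perm.mul_apply]
    using (hθ a a _ _ (θ.refl a) hinv).1

theorem blockKernel_ne_bot (hfaith : S.Faithful) (hθ : S.IsCong θ) (hne : θ ≠ ⊥) :
    S.blockKernel hθ ≠ ⊥ := by
  obtain ⟨a, b, hab, hab_ne⟩ : ∃ a b, θ a b ∧ a ≠ b := by
    by_contra! h
    exact hne (Setoid.ext fun a b => ⟨h a b, fun e => e ▸ θ.refl a⟩)
  rw [Ne, Subgroup.eq_bot_iff_forall]
  intro h
  have hone := h _ (L_mul_inv_L_mem_blockKernel hθ hab)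
  exact hab_ne (hfaith (mul_inv_eq_one.1 (congrArg Subtype.val hone)))

theorem iInf_blockKernel_eq_bot {ι : Type*} {α : ι → Setoid Q} (hcong : ∀ i, S.IsCong (α i))
    (hmeet : (⨅ i, α i) = ⊥) : (⨅ i, S.blockKernel (hcong i)) = ⊥ := by
  refine (Subgroup.eq_bot_iff_forall _).2 fun g hg => Subtype.ext <| Equiv.ext fun x => ?_
  have hx : (⨅ i, α i) (g.1 x) x := by
    rw [iInf, Setoid.sInf_iff]
    rintro _ ⟨i, rfl⟩
    exact (mem_blockKernel (hcong i)).1 (Subgroup.mem_iInf.1 hg i) x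
  rwa [hmeet] at hx

end LQStr

theorem stmt5 {Q : Type*} {ι : Type*} (S : LQStr Q) (hfaith : S.Faithful)
    (α : ι → Setoid Q) (hcong : ∀ i, S.IsCong (α i)) (hne : ∀ i, α i ≠ ⊥)
    (hmeet : (⨅ i, α i) = ⊥) :
    ∃ N : ι → Subgroup ↥S.Lmlt,
      (∀ i, N i ≠ ⊥) ∧ (∀ i, (N i).Normal) ∧ (⨅ i, N i) = ⊥ :=
  ⟨fun i => S.blockKernel (hcong i), fun i => LQStr.blockKernel_ne_bot hfaith (hcong i) (hne i),
    fun _ => inferInstance, LQStr.iInf_blockKernel_eq_bot hcong hmeet⟩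
end

section
/- Let H be an abelian group, K a nilpotent group, ρ : K → Aut(H) a group homomorphism, and G = H ⋊_ρ K the corresponding semidirect product. If the center of G is trivial, then ρ is injective (ker ρ = 1). -/
/-!
If `k ∈ ker ρ` is central in `K`, then `(1, k)` is central in `H ⋊[ρ] K`. So a trivial centre
forces `ker ρ ⊓ Z(K) = ⊥`, and in a nilpotent group a normal subgroup meeting the centre trivially
is trivial: climbing the upper central series, `N ⊓ Zₙ = ⊥` puts `N ⊓ Zₙ₊₁` inside `Z(K)`.
-/

namespace Subgroup

variable {G : Type*} [Group G] (N : Subgroup G) [N.Normal]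

theorem inf_upperCentralSeries_succ_le_center {n : ℕ}
    (h : N ⊓ upperCentralSeries G n = ⊥) :
    N ⊓ upperCentralSeries G (n + 1) ≤ center G := by
  rintro x ⟨hxN, hxZ⟩
  refine mem_center_iff.mpr fun g => ?_
  have hcomm : x * g * x⁻¹ * g⁻¹ ∈ N ⊓ upperCentralSeries G n := by
    refine mem_inf.mpr ⟨?_, mem_upperCentralSeries_succ_iff.mp hxZ g⟩
    simpa only [mul_assoc] using N.mul_mem hxN (‹N.Normal›.conj_mem _ (N.inv_mem hxN) g)
  rw [h, mem_bot, ← commutatorElement_def, commutatorElement_eq_one_iff_mul_comm] at hcomm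
  exact hcomm.symm

theorem inf_upperCentralSeries_eq_bot (h : N ⊓ center G = ⊥) (n : ℕ) :
    N ⊓ upperCentralSeries G n = ⊥ := by
  induction n with
  | zero => exact inf_bot_eq N
  | succ n ih =>
    exact eq_bot_mono (le_inf inf_le_left (N.inf_upperCentralSeries_succ_le_center ih)) h

theorem eq_bot_of_inf_center_eq_bot [Group.IsNilpotent G] (h : N ⊓ center G = ⊥) : N = ⊥ := by
  obtain ⟨n, hn⟩ := Group.IsNilpotent.nilpotent' (G := G)
  simpa [hn] using N.inf_upperCentralSeries_eq_bot h n

end Subgroup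

namespace SemidirectProduct

variable {N G : Type*} [Group N] [Group G] (φ : G →* MulAut N)

theorem map_inr_ker_inf_center_le_center :
    (φ.ker ⊓ Subgroup.center G).map (inr : G →* N ⋊[φ] G) ≤ Subgroup.center (N ⋊[φ] G) := by
  rintro _ ⟨g, ⟨hgker, hgZ⟩, rfl⟩
  refine Subgroup.mem_center_iff.mpr fun x => ?_
  have hφg : φ g = 1 := hgker
  ext
  · simp [hφg]
  · simp [Subgroup.mem_center_iff.mp hgZ x.right]

end SemidirectProduct

theorem stmt17 {H K : Type*} [CommGroup H] [Group K] (hnilp : Group.IsNilpotent K)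
    (ρ : K →* MulAut H)
    (hcenter : Subgroup.center (H ⋊[ρ] K) = ⊥) :
    ρ.ker = ⊥ := by
  have := hnilp
  refine ρ.ker.eq_bot_of_inf_center_eq_bot ?_
  rw [← Subgroup.map_eq_bot_iff_of_injective _ (SemidirectProduct.inr_injective (φ := ρ)),
    eq_bot_iff, ← hcenter]
  exact SemidirectProduct.map_inr_ker_inf_center_le_center ρ
end

section
/- Let p be an odd prime and let m, n be natural numbers. If there exists an injective group homomorphism from the elementary abelian 2-group (ZMod 2)^m into the general linear group GL_n(ZMod p) (equivalently, if the semidirect product (ZMod p)^n ⋊_ρ (ZMod 2)^m has faithful action ρ), then m ≤ n. -/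
/-!
Since `2` is invertible in `K`, the elements `e_χ = 2⁻ᵐ ∑ₓ χ(x) ρ(x)`, for `χ` running over the
`2ᵐ` characters `x ↦ (-1) ^ (χ ⬝ᵥ x)` of `E = (ZMod 2)ᵐ`, form a complete family of orthogonal
idempotents in `End V`, so at most `dim V` of them are nonzero, and `ρ(x) = ∑_χ χ(x) e_χ`.
If `ρ` is faithful, the characters with `e_χ ≠ 0` therefore separate the points of `E`: as
linear forms on the `ZMod 2`-space `E` they have trivial common kernel, so there are at least `m`
of them.
-/

open Finset Module

theorem OrthogonalIdempotents.card_ne_zero_le_finrank {K V I : Type*} [DivisionRing K]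
    [AddCommGroup V] [Module K V] [FiniteDimensional K V] {e : I → Module.End K V}
    (he : OrthogonalIdempotents e) [Fintype {i // e i ≠ 0}] :
    Fintype.card {i // e i ≠ 0} ≤ finrank K V := by
  have hw (i : {i // e i ≠ 0}) : ∃ w, e i w ≠ 0 := by
    by_contra! h
    exact i.2 (LinearMap.ext h)
  choose w hw using hw
  refine LinearIndependent.fintype_card_le_finrank (b := fun i ↦ e i (w i)) ?_
  rw [Fintype.linearIndependent_iff]
  intro c hc i
  have hproj : e i (∑ j, c j • e j (w j)) = c i • e i (w i) := by
    rw [map_sum, Fintype.sum_eq_single i]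
    · rw [map_smul, ← Module.End.mul_apply, he.idem i]
    · intro j hji
      rw [map_smul, ← Module.End.mul_apply, he.ortho (Subtype.coe_ne_coe.mpr hji.symm),
        LinearMap.zero_apply, smul_zero]
  rw [hc, map_zero] at hproj
  exact (smul_eq_zero.mp hproj.symm).resolve_right (hw i)

namespace ElementaryAbelianTwo

section DualChar

variable (K : Type*) [Field K] {ι : Type*} [Fintype ι]

/-- `dualChar K χ x = (-1) ^ (χ ⬝ᵥ x)`. -/
def dualChar : (ι → ZMod 2) →+ AddChar (ι → ZMod 2) K where
  toFun χ :=
    { toFun x := AddChar.zmodChar 2 (neg_one_sq : (-1 : K) ^ 2 = 1) (χ ⬝ᵥ x)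
      map_zero_eq_one' := by simp
      map_add_eq_mul' x y := by simp only [dotProduct_add, AddChar.map_add_eq_mul] }
  map_zero' := by ext; simp
  map_add' ψ χ := by ext; simp [add_dotProduct, AddChar.map_add_eq_mul]

variable {K}

lemma dualChar_apply_of_dotProduct_eq_zero {χ x : ι → ZMod 2} (h : χ ⬝ᵥ x = 0) :
    dualChar K χ x = 1 := by
  simp [dualChar, h]

lemma dualChar_comm (χ x : ι → ZMod 2) : dualChar K χ x = dualChar K x χ := by
  simp [dualChar, dotProduct_comm]

lemma dualChar_apply_self_mul (χ x : ι → ZMod 2) : dualChar K χ x * dualChar K χ x = 1 := by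
  rw [← AddChar.map_add_eq_mul, ZModModule.add_self, AddChar.map_zero_eq_one]

variable [DecidableEq ι]

lemma dualChar_injective (h2 : (2 : K) ≠ 0) : Function.Injective (dualChar K (ι := ι)) := by
  refine (injective_iff_map_eq_zero _).mpr fun χ hχ ↦ funext fun j ↦ ?_
  have hj := DFunLike.congr_fun hχ (Pi.single j 1)
  have hχj : χ j = 0 ∨ χ j = 1 := by generalize χ j = a; revert a; decide
  refine hχj.resolve_right fun h ↦ ?_
  have hne : (-1 : K) ≠ 1 := fun h ↦ h2 (by linear_combination -h)
  simp [dualChar, h, AddChar.zmodChar_apply, ZMod.val_one] at hj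
  exact hne hj

lemma natCast_card_ne_zero (h2 : (2 : K) ≠ 0) : (Fintype.card (ι → ZMod 2) : K) ≠ 0 := by
  simpa [Fintype.card_fun] using pow_ne_zero _ h2

lemma sum_dualChar_apply (h2 : (2 : K) ≠ 0) (χ : ι → ZMod 2) :
    ∑ x, dualChar K χ x = if χ = 0 then (Fintype.card (ι → ZMod 2) : K) else 0 := by
  classical
  rw [AddChar.sum_eq_ite]
  simp only [map_eq_zero_iff _ (dualChar_injective h2)]

end DualChar

section CharIdempotent

variable (K : Type*) [Field K] {ι A : Type*} [Fintype ι] [DecidableEq ι] [Ring A] [Algebra K A]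
  (ρ : Multiplicative (ι → ZMod 2) →* A)

/-- The image under `ρ` of the primitive idempotent of the group algebra attached to the
character `dualChar K χ`. -/
noncomputable def charIdempotent (χ : ι → ZMod 2) : A :=
  (Fintype.card (ι → ZMod 2) : K)⁻¹ • ∑ x, dualChar K χ x • ρ (.ofAdd x)

variable {K}

lemma mul_charIdempotent (y χ : ι → ZMod 2) :
    ρ (.ofAdd y) * charIdempotent K ρ χ = dualChar K χ y • charIdempotent K ρ χ := by
  have hshift : ρ (.ofAdd y) * ∑ x, dualChar K χ x • ρ (.ofAdd x) =
      dualChar K χ y • ∑ x, dualChar K χ x • ρ (.ofAdd x) := by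
    rw [Finset.mul_sum, Finset.smul_sum]
    refine Fintype.sum_equiv (Equiv.addLeft y) _ _ fun x ↦ ?_
    rw [Equiv.coe_addLeft, AddChar.map_add_eq_mul, smul_smul, ← mul_assoc,
      dualChar_apply_self_mul, one_mul, mul_smul_comm, ofAdd_add, map_mul]
  rw [charIdempotent, mul_smul_comm, hshift, smul_comm]

lemma charIdempotent_mul_charIdempotent (h2 : (2 : K) ≠ 0) (ψ χ : ι → ZMod 2) :
    charIdempotent K ρ ψ * charIdempotent K ρ χ = if ψ = χ then charIdempotent K ρ ψ else 0 := by
  have hsum : ∑ y, dualChar K ψ y • ρ (.ofAdd y) * charIdempotent K ρ χ =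
      (∑ y, dualChar K (ψ + χ) y) • charIdempotent K ρ χ := by
    simp only [smul_mul_assoc, mul_charIdempotent, smul_smul, Finset.sum_smul, map_add,
      AddChar.add_apply]
  conv_lhs => rw [charIdempotent, smul_mul_assoc, Finset.sum_mul, hsum, sum_dualChar_apply h2]
  simp only [add_eq_zero_iff_eq_neg, ZModModule.neg_eq_self]
  split_ifs with h
  · rw [h, smul_smul, inv_mul_cancel₀ (natCast_card_ne_zero h2), one_smul]
  · rw [zero_smul, smul_zero]

lemma sum_charIdempotent (h2 : (2 : K) ≠ 0) : ∑ χ, charIdempotent K ρ χ = 1 := by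
  have hsum : ∑ χ, ∑ x, dualChar K χ x • ρ (.ofAdd x) =
      (Fintype.card (ι → ZMod 2) : K) • 1 := by
    rw [Finset.sum_comm]
    calc ∑ x, ∑ χ, dualChar K χ x • ρ (.ofAdd x)
        = ∑ x, (∑ χ, dualChar K x χ) • ρ (.ofAdd x) :=
          Finset.sum_congr rfl fun x _ ↦ by simp only [Finset.sum_smul, dualChar_comm _ x]
      _ = (Fintype.card (ι → ZMod 2) : K) • 1 := by
          simp [sum_dualChar_apply h2, ite_smul]
  simp only [charIdempotent, ← Finset.smul_sum]
  rw [hsum, smul_smul, inv_mul_cancel₀ (natCast_card_ne_zero h2), one_smul]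

theorem completeOrthogonalIdempotents_charIdempotent (h2 : (2 : K) ≠ 0) :
    CompleteOrthogonalIdempotents (charIdempotent K ρ) where
  toOrthogonalIdempotents :=
    OrthogonalIdempotents.iff_mul_eq.mpr (charIdempotent_mul_charIdempotent ρ h2)
  complete := sum_charIdempotent ρ h2

lemma sum_dualChar_smul_charIdempotent (h2 : (2 : K) ≠ 0) (x : ι → ZMod 2) :
    ∑ χ, dualChar K χ x • charIdempotent K ρ χ = ρ (.ofAdd x) := by
  simp only [← mul_charIdempotent, ← Finset.mul_sum, sum_charIdempotent ρ h2, mul_one]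

end CharIdempotent

theorem card_le_finrank_of_injective {K V ι : Type*} [Field K] [AddCommGroup V] [Module K V]
    [FiniteDimensional K V] [Fintype ι] [DecidableEq ι] (h2 : (2 : K) ≠ 0)
    (ρ : Multiplicative (ι → ZMod 2) →* Module.End K V) (hρ : Function.Injective ρ) :
    Fintype.card ι ≤ finrank K V := by
  classical
  have he := completeOrthogonalIdempotents_charIdempotent ρ h2
  let S := {χ // charIdempotent K ρ χ ≠ 0}
  -- `x` acts trivially on every nonzero isotypic component, hence on all of `V`
  have hinj : Function.Injective (Matrix.of fun χ : S ↦ χ.1).mulVecLin := by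
    refine (injective_iff_map_eq_zero _).mpr fun x hx ↦ ?_
    have hρx : ρ (.ofAdd x) = ρ 1 := by
      rw [← sum_dualChar_smul_charIdempotent ρ h2, map_one, ← he.complete]
      refine Finset.sum_congr rfl fun χ _ ↦ ?_
      by_cases hχ : charIdempotent K ρ χ = 0
      · rw [hχ, smul_zero]
      · have hχx : χ ⬝ᵥ x = 0 := congrFun hx ⟨χ, hχ⟩
        rw [dualChar_apply_of_dotProduct_eq_zero hχx, one_smul]
    simpa using hρ hρx
  calc Fintype.card ι = finrank (ZMod 2) (ι → ZMod 2) := (finrank_fintype_fun_eq_card _).symm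
    _ ≤ finrank (ZMod 2) (S → ZMod 2) := LinearMap.finrank_le_finrank_of_injective hinj
    _ = Fintype.card S := finrank_fintype_fun_eq_card _
    _ ≤ finrank K V := he.toOrthogonalIdempotents.card_ne_zero_le_finrank

end ElementaryAbelianTwo

theorem stmt18 (p m n : ℕ) (hp : p.Prime) (hodd : Odd p)
    (f : Multiplicative (Fin m → ZMod 2) →* (Matrix (Fin n) (Fin n) (ZMod p))ˣ)
    (hf : Function.Injective f) :
    m ≤ n := by
  have : Fact p.Prime := ⟨hp⟩
  have h2 : (2 : ZMod p) ≠ 0 := by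
    refine Ring.two_ne_zero ?_
    rw [ZMod.ringChar_zmod_n]
    rintro rfl
    exact Nat.not_odd_iff_even.mpr even_two hodd
  let ρ := (Matrix.toLinAlgEquiv' : _ ≃ₐ[ZMod p] _).toMonoidHom.comp ((Units.coeHom _).comp f)
  have hρ : Function.Injective ρ :=
    Matrix.toLinAlgEquiv'.injective.comp (Units.val_injective.comp hf)
  simpa using ElementaryAbelianTwo.card_le_finrank_of_injective h2 ρ hρ
end

section
/- Let p be an odd prime, n a natural number, and K a finite 2-group of nilpotency class 2 whose commutator subgroup [K,K] is generated by a single element z of order 2. Let ρ : K → GL_n(ZMod p) be an injective group homomorphism (a faithful action of K on (ZMod p)^n), and suppose the semidirect product (ZMod p)^n ⋊ ⟨z⟩ formed via the restriction of ρ to the subgroup generated by z has trivial center. Then ρ(z) = −Id_n and n is even. -/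
/-!
Elements of `(ZMod p)ⁿ` fixed by `ρ z` are central in `(ZMod p)ⁿ ⋊ ⟨z⟩`, so trivial center means
`ρ z` has no nonzero fixed vector. Since `ρ z` is an involution, `v + ρ z v` is always fixed, hence
zero, i.e. `ρ z = -1`. As `z` is a commutator, `det (ρ z) = (-1)ⁿ = 1` in `ZMod p` with `p` odd,
so `n` is even.
-/

/-- The action of an invertible `n × n` matrix over `ZMod p` on the (multiplicatively
written) group `(ZMod p)ⁿ`, identifying `GL_n(ZMod p)` with the automorphism group. -/
def glToAut (p n : ℕ) :
    (Matrix (Fin n) (Fin n) (ZMod p))ˣ →* MulAut (Multiplicative (Fin n → ZMod p)) where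
  toFun A :=
    { toFun := fun v => Multiplicative.ofAdd (A.val.mulVec (Multiplicative.toAdd v))
      invFun := fun v => Multiplicative.ofAdd ((A⁻¹).val.mulVec (Multiplicative.toAdd v))
      left_inv := fun v => by
        simp [Matrix.mulVec_mulVec]
      right_inv := fun v => by
        simp [Matrix.mulVec_mulVec]
      map_mul' := fun v w => by
        simp [Matrix.mulVec_add] }
  map_one' := by
    ext v
    simp
  map_mul' A B := by
    ext v
    simp [Matrix.mulVec_mulVec]

open Matrix

lemma MonoidHom.apply_eq_of_mem_zpowers {G N : Type*} [Group G] [Monoid N]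
    (φ : G →* MulAut N) {g k : G} {x : N} (hg : φ g x = x) (hk : k ∈ Subgroup.zpowers g) :
    φ k x = x := by
  have hle : Subgroup.zpowers g ≤ (MulAction.stabilizer (MulAut N) x).comap φ :=
    Subgroup.zpowers_le.mpr hg
  exact hle hk

lemma SemidirectProduct.inl_mem_center_of_forall_apply_eq {N G : Type*} [CommGroup N] [Group G]
    {φ : G →* MulAut N} {x : N} (hx : ∀ g, φ g x = x) :
    SemidirectProduct.inl x ∈ Subgroup.center (N ⋊[φ] G) := by
  rw [Subgroup.mem_center_iff]
  rintro ⟨y, g⟩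
  ext
  · simp [hx, mul_comm]
  · simp

lemma Matrix.eq_neg_one_of_mul_self_eq_one {ι R : Type*} [Fintype ι] [DecidableEq ι] [CommRing R]
    {A : Matrix ι ι R} (hA : A * A = 1) (hfix : ∀ v, A *ᵥ v = v → v = 0) : A = -1 := by
  have hfixed : ∀ v, A *ᵥ ((1 + A) *ᵥ v) = (1 + A) *ᵥ v := fun v => by
    rw [mulVec_mulVec, mul_add, hA, mul_one, add_comm]
  have hzero : 1 + A = 0 := ext_iff_mulVec.mpr fun v => by
    rw [hfix _ (hfixed v), zero_mulVec]
  exact eq_neg_of_add_eq_zero_right hzero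

lemma Matrix.det_eq_one_of_mem_commutator {K ι R : Type*} [Group K] [Fintype ι] [DecidableEq ι]
    [CommRing R] (ρ : K →* (Matrix ι ι R)ˣ) {z : K} (hz : z ∈ commutator K) :
    (ρ z).val.det = 1 := by
  have hker := Abelianization.commutator_subset_ker ((Units.map detMonoidHom).comp ρ) hz
  simpa using congrArg Units.val (MonoidHom.mem_ker.mp hker)

lemma Matrix.det_neg_one_eq_one_iff_even {R : Type*} [CommRing R] (h : (-1 : R) ≠ 1) (n : ℕ) :
    (-1 : Matrix (Fin n) (Fin n) R).det = 1 ↔ Even n := by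
  rw [det_neg, det_one, mul_one, Fintype.card_fin, neg_one_pow_eq_one_iff_even h]

theorem stmt19_general (p n : ℕ) (hp : p.Prime) (hodd : Odd p)
    {K : Type*} [Group K]
    (z : K) (hgen : commutator K = Subgroup.zpowers z) (hz : orderOf z = 2)
    (ρ : K →* (Matrix (Fin n) (Fin n) (ZMod p))ˣ)
    -- the semidirect product `(ZMod p)ⁿ ⋊ ⟨z⟩` via the restriction of `ρ` has trivial center:
    (hcenter : Subgroup.center
      (Multiplicative (Fin n → ZMod p) ⋊[(glToAut p n).comp
        (ρ.comp (Subgroup.zpowers z).subtype)] ↥(Subgroup.zpowers z)) = ⊥) :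
    ρ z = -1 ∧ Even n := by
  have hinvol : (ρ z).val * (ρ z).val = 1 := by
    rw [← Units.val_mul, ← map_mul, ← sq, ← hz, pow_orderOf_eq_one, map_one, Units.val_one]
  have hfix : ∀ v, (ρ z).val *ᵥ v = v → v = 0 := fun v hv => by
    have hcentral := SemidirectProduct.inl_mem_center_of_forall_apply_eq
      (φ := (glToAut p n).comp (ρ.comp (Subgroup.zpowers z).subtype))
      (x := Multiplicative.ofAdd v) fun k =>
        ((glToAut p n).comp ρ).apply_eq_of_mem_zpowers (congrArg Multiplicative.ofAdd hv) k.2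
    rw [hcenter, Subgroup.mem_bot, ← map_one SemidirectProduct.inl,
      SemidirectProduct.inl_inj] at hcentral
    exact hcentral
  have hneg : ρ z = -1 := Units.ext (Matrix.eq_neg_one_of_mul_self_eq_one hinvol hfix)
  have : Fact (2 < p) := ⟨hp.two_le.lt_of_ne fun h => by subst h; exact absurd hodd (by decide)⟩
  have hdet := Matrix.det_eq_one_of_mem_commutator ρ (hgen ▸ Subgroup.mem_zpowers z)
  rw [hneg, Units.val_neg, Units.val_one, Matrix.det_neg_one_eq_one_iff_even ZMod.neg_one_ne_one]
    at hdet
  exact ⟨hneg, hdet⟩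

theorem stmt19 (p n : ℕ) (hp : p.Prime) (hodd : Odd p)
    {K : Type*} [Group K] [Finite K] (h2 : IsPGroup 2 K)
    -- nilpotency class 2 with `[K,K] = ⟨z⟩`, `z` of order 2:
    (hclass : commutator K ≤ Subgroup.center K)
    (z : K) (hgen : commutator K = Subgroup.zpowers z) (hz : orderOf z = 2)
    (ρ : K →* (Matrix (Fin n) (Fin n) (ZMod p))ˣ)
    (hρ : Function.Injective ρ)
    -- the semidirect product `(ZMod p)ⁿ ⋊ ⟨z⟩` via the restriction of `ρ` has trivial center:
    (hcenter : Subgroup.center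
      (Multiplicative (Fin n → ZMod p) ⋊[(glToAut p n).comp
        (ρ.comp (Subgroup.zpowers z).subtype)] ↥(Subgroup.zpowers z)) = ⊥) :
    ρ z = -1 ∧ Even n :=
  stmt19_general p n hp hodd z hgen hz ρ hcenter
end
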